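/- Let C be a real constant, z = x + iy, γ = i(x²−y²), δ = y(1+x²−y²/3) − i[x(1+y²−x²/3) + C − t], U(x,y,t) = −3((x²+y²+3)(x²−y²) − 6x(C−t))/Q(x,y,t) with Q(x,y,t) = (x²+y²)³ + 3(x⁴+y⁴) + 18x²y² + 9(x²+y²) + 9(C−t)² + (6x³ − 18xy² − 18x)(C−t), and V = (z(γ̄−γ) − δz² − δ̄)²/(|γ|²+|δ|²)² + 2U/(1+|z|²) − 2iz(z(γ̄−γ) − δz² − δ̄)/((|γ|²+|δ|²)(1+|z|²)). Then V, viewed as a map from ℝ³ to ℂ, is real-analytic on ℝ³ \ {(0,0,C)}. -/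

import Mathlib

open Complex

/-- The denominator polynomial `Q(x,y,t)` depending on the real constant `C`. -/
def Q (C x y t : ℝ) : ℝ :=
  (x^2 + y^2)^3 + 3*(x^4 + y^4) + 18*x^2*y^2 + 9*(x^2 + y^2)
    + 9*(C - t)^2 + (6*x^3 - 18*x*y^2 - 18*x)*(C - t)

/-- The potential `U(x,y,t)` of the mNV solution. -/
noncomputable def U (C x y t : ℝ) : ℝ :=
  -(3 * ((x^2 + y^2 + 3) * (x^2 - y^2) - 6*x*(C - t))) / Q C x y t

/-- `γ(x,y) = i(x² − y²)`. -/
noncomputable def gammaF (x y : ℝ) : ℂ := Complex.I * ((x^2 - y^2 : ℝ) : ℂ)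

/-- `δ(x,y,t) = y(1 + x² − y²/3) − i[x(1 + y² − x²/3) + C − t]`. -/
noncomputable def deltaF (C x y t : ℝ) : ℂ :=
  ((y * (1 + x^2 - y^2/3) : ℝ) : ℂ)
    - Complex.I * ((x * (1 + y^2 - x^2/3) + C - t : ℝ) : ℂ)

/-- The auxiliary function `V(x,y,t)` accompanying `U` in the mNV equation. -/
noncomputable def V (C x y t : ℝ) : ℂ :=
  let z : ℂ := (x : ℂ) + Complex.I * (y : ℂ)
  let g : ℂ := gammaF x y
  let d : ℂ := deltaF C x y t
  let w : ℂ := z * (starRingEnd ℂ g - g) - d * z^2 - starRingEnd ℂ d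
  let D : ℂ := ((‖g‖ ^ 2 + ‖d‖ ^ 2 : ℝ) : ℂ)
  w^2 / D^2 + 2 * ((U C x y t : ℝ) : ℂ) / ((1 + ‖z‖ ^ 2 : ℝ) : ℂ)
    - 2 * Complex.I * z * w / (D * ((1 + ‖z‖ ^ 2 : ℝ) : ℂ))

/- ### Auxiliary definitions for the proof -/

noncomputable def cA (p : ℝ × ℝ × ℝ) : ℂ :=
  (p.2.1 : ℂ) * (1 + (p.1 : ℂ)^2 - (p.2.1 : ℂ)^2/3)

noncomputable def cB (C : ℝ) (p : ℝ × ℝ × ℝ) : ℂ :=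
  (p.1 : ℂ) * (1 + (p.2.1 : ℂ)^2 - (p.1 : ℂ)^2/3) + (C : ℂ) - (p.2.2 : ℂ)

noncomputable def cZ (p : ℝ × ℝ × ℝ) : ℂ := (p.1 : ℂ) + Complex.I * (p.2.1 : ℂ)

noncomputable def cW (C : ℝ) (p : ℝ × ℝ × ℝ) : ℂ :=
  cZ p * (-2 * (Complex.I * ((p.1 : ℂ)^2 - (p.2.1 : ℂ)^2)))
    - (cA p - Complex.I * cB C p) * (cZ p)^2 - (cA p + Complex.I * cB C p)

noncomputable def cD (C : ℝ) (p : ℝ × ℝ × ℝ) : ℂ :=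
  ((p.1 : ℂ)^2 - (p.2.1 : ℂ)^2)^2 + (cA p)^2 + (cB C p)^2

noncomputable def cN (C : ℝ) (p : ℝ × ℝ × ℝ) : ℂ :=
  (-3) * ((((p.1 : ℂ)^2 + (p.2.1 : ℂ)^2) + 3) * ((p.1 : ℂ)^2 - (p.2.1 : ℂ)^2)
    - (6 * (p.1 : ℂ)) * ((C : ℂ) - (p.2.2 : ℂ)))

noncomputable def cQ (C : ℝ) (p : ℝ × ℝ × ℝ) : ℂ :=
  ((p.1 : ℂ)^2 + (p.2.1 : ℂ)^2)^3 + 3*((p.1 : ℂ)^4 + (p.2.1 : ℂ)^4)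
    + 18*(p.1 : ℂ)^2*(p.2.1 : ℂ)^2 + 9*((p.1 : ℂ)^2 + (p.2.1 : ℂ)^2)
    + 9*((C : ℂ) - (p.2.2 : ℂ))^2
    + (6*(p.1 : ℂ)^3 - 18*(p.1 : ℂ)*(p.2.1 : ℂ)^2 - 18*(p.1 : ℂ)) * ((C : ℂ) - (p.2.2 : ℂ))

noncomputable def cZ1 (p : ℝ × ℝ × ℝ) : ℂ := 1 + (p.1 : ℂ)^2 + (p.2.1 : ℂ)^2

noncomputable def Fv (C : ℝ) (p : ℝ × ℝ × ℝ) : ℂ :=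
  (cW C p)^2 / (cD C p)^2 + 2 * (cN C p / cQ C p) / cZ1 p
    - 2 * Complex.I * cZ p * cW C p / (cD C p * cZ1 p)

set_option maxHeartbeats 1000000 in
lemma V_eq_Fv (C : ℝ) (p : ℝ × ℝ × ℝ) : V C p.1 p.2.1 p.2.2 = Fv C p := by
  obtain ⟨x, y, t⟩ := p
  show V C x y t = Fv C (x, y, t)
  have hw : ((x : ℂ) + Complex.I * (y : ℂ)) * (starRingEnd ℂ (gammaF x y) - gammaF x y)
      - deltaF C x y t * ((x : ℂ) + Complex.I * (y : ℂ))^2 - starRingEnd ℂ (deltaF C x y t)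
      = cW C (x, y, t) := by
    unfold cW cZ cA cB gammaF deltaF
    simp only [map_mul, map_sub, Complex.conj_I, Complex.conj_ofReal]
    push_cast
    ring
  have hDv : ((‖gammaF x y‖ ^ 2 + ‖deltaF C x y t‖ ^ 2 : ℝ) : ℂ)
      = cD C (x, y, t) := by
    unfold cD cA cB gammaF deltaF
    simp only [Complex.sq_norm, Complex.normSq_apply, Complex.add_re, Complex.add_im,
      Complex.sub_re, Complex.sub_im, Complex.mul_re, Complex.mul_im, Complex.I_re,
      Complex.I_im, Complex.ofReal_re, Complex.ofReal_im]
    push_cast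
    ring
  have hU : ((U C x y t : ℝ) : ℂ) = cN C (x, y, t) / cQ C (x, y, t) := by
    unfold U Q cN cQ
    push_cast
    ring
  have hZv : ((1 + ‖(x : ℂ) + Complex.I * (y : ℂ)‖ ^ 2 : ℝ) : ℂ)
      = cZ1 (x, y, t) := by
    unfold cZ1
    simp only [Complex.sq_norm, Complex.normSq_apply, Complex.add_re, Complex.add_im,
      Complex.mul_re, Complex.mul_im, Complex.I_re, Complex.I_im, Complex.ofReal_re,
      Complex.ofReal_im]
    push_cast
    ring
  simp only [V]
  rw [hw, hDv, hU, hZv]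
  rfl

/- ### Nonvanishing of the denominators -/

lemma S_ne_zero (C x y t : ℝ) (h : ¬(x = 0 ∧ y = 0 ∧ t = C)) :
    (x^2 - y^2)^2 + (y*(1 + x^2 - y^2/3))^2 + (x*(1 + y^2 - x^2/3) + C - t)^2 ≠ 0 := by
  intro h0
  apply h
  have s1 := sq_nonneg (x^2 - y^2)
  have s2 := sq_nonneg (y*(1 + x^2 - y^2/3))
  have s3 := sq_nonneg (x*(1 + y^2 - x^2/3) + C - t)
  have h1 : x^2 - y^2 = 0 := by nlinarith
  have h2 : y*(1 + x^2 - y^2/3) = 0 := by nlinarith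
  have h3 : x*(1 + y^2 - x^2/3) + C - t = 0 := by nlinarith
  have hy : y = 0 := by
    rcases mul_eq_zero.1 h2 with hy | hc
    · exact hy
    · nlinarith [sq_nonneg x, sq_nonneg y]
  have hx : x = 0 := by nlinarith [sq_nonneg x]
  refine ⟨hx, hy, ?_⟩
  rw [hx] at h3
  linarith

lemma Q_ne_zero (C x y t : ℝ) (h : ¬(x = 0 ∧ y = 0 ∧ t = C)) : Q C x y t ≠ 0 := by
  intro h0
  apply h
  have key : Q C x y t = (x^3 - 3*x*y^2 - 3*x + 3*(C - t))^2 + (y^3 - 3*x^2*y)^2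
      + 9*x^4 + 9*y^2 + 3*y^4 := by unfold Q; ring
  rw [key] at h0
  have s1 := sq_nonneg (x^3 - 3*x*y^2 - 3*x + 3*(C - t))
  have s2 := sq_nonneg (y^3 - 3*x^2*y)
  have s4 := sq_nonneg (x^2)
  have s5 := sq_nonneg (y^2)
  have hx4 : x^4 = 0 := by nlinarith
  have hy2 : y^2 = 0 := by nlinarith
  have hx : x = 0 := by
    have := pow_eq_zero_iff (n := 4) (by norm_num) |>.mp hx4
    exact this
  have hy : y = 0 := by
    have := pow_eq_zero_iff (n := 2) (by norm_num) |>.mp hy2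
    exact this
  refine ⟨hx, hy, ?_⟩
  rw [hx, hy] at h0
  nlinarith

/- ### Analyticity of the building blocks -/

lemma analyticAt_x (p : ℝ × ℝ × ℝ) : AnalyticAt ℝ (fun p : ℝ × ℝ × ℝ => ((p.1 : ℝ) : ℂ)) p :=
  (Complex.ofRealCLM.analyticAt _).comp ((ContinuousLinearMap.fst ℝ ℝ (ℝ × ℝ)).analyticAt p)

lemma analyticAt_y (p : ℝ × ℝ × ℝ) : AnalyticAt ℝ (fun p : ℝ × ℝ × ℝ => ((p.2.1 : ℝ) : ℂ)) p :=
  (Complex.ofRealCLM.analyticAt _).comp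
    (((ContinuousLinearMap.fst ℝ ℝ ℝ).comp (ContinuousLinearMap.snd ℝ ℝ (ℝ × ℝ))).analyticAt p)

lemma analyticAt_t (p : ℝ × ℝ × ℝ) : AnalyticAt ℝ (fun p : ℝ × ℝ × ℝ => ((p.2.2 : ℝ) : ℂ)) p :=
  (Complex.ofRealCLM.analyticAt _).comp
    (((ContinuousLinearMap.snd ℝ ℝ ℝ).comp (ContinuousLinearMap.snd ℝ ℝ (ℝ × ℝ))).analyticAt p)

lemma analyticAt_cA (p : ℝ × ℝ × ℝ) : AnalyticAt ℝ cA p := by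
  unfold cA
  exact (analyticAt_y p).mul (((analyticAt_const.add ((analyticAt_x p).pow 2)).sub
    (((analyticAt_y p).pow 2).div analyticAt_const (by norm_num))))

lemma analyticAt_cB (C : ℝ) (p : ℝ × ℝ × ℝ) : AnalyticAt ℝ (cB C) p := by
  unfold cB
  exact (((analyticAt_x p).mul ((analyticAt_const.add ((analyticAt_y p).pow 2)).sub
    (((analyticAt_x p).pow 2).div analyticAt_const (by norm_num)))).add
      analyticAt_const).sub (analyticAt_t p)

lemma analyticAt_cZ (p : ℝ × ℝ × ℝ) : AnalyticAt ℝ cZ p := by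
  unfold cZ
  exact (analyticAt_x p).add (analyticAt_const.mul (analyticAt_y p))

lemma analyticAt_cW (C : ℝ) (p : ℝ × ℝ × ℝ) : AnalyticAt ℝ (cW C) p := by
  unfold cW
  exact (((analyticAt_cZ p).mul (analyticAt_const.mul (analyticAt_const.mul
    (((analyticAt_x p).pow 2).sub ((analyticAt_y p).pow 2))))).sub
    (((analyticAt_cA p).sub (analyticAt_const.mul (analyticAt_cB C p))).mul
      ((analyticAt_cZ p).pow 2))).sub
    ((analyticAt_cA p).add (analyticAt_const.mul (analyticAt_cB C p)))

lemma analyticAt_cD (C : ℝ) (p : ℝ × ℝ × ℝ) : AnalyticAt ℝ (cD C) p := by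
  unfold cD
  exact (((((analyticAt_x p).pow 2).sub ((analyticAt_y p).pow 2)).pow 2).add
    ((analyticAt_cA p).pow 2)).add ((analyticAt_cB C p).pow 2)

lemma analyticAt_cN (C : ℝ) (p : ℝ × ℝ × ℝ) : AnalyticAt ℝ (cN C) p := by
  unfold cN
  exact analyticAt_const.mul
    ((((((analyticAt_x p).pow 2).add ((analyticAt_y p).pow 2)).add analyticAt_const).mul
      (((analyticAt_x p).pow 2).sub ((analyticAt_y p).pow 2))).sub
      ((analyticAt_const.mul (analyticAt_x p)).mul
        (analyticAt_const.sub (analyticAt_t p))))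

lemma analyticAt_cQ (C : ℝ) (p : ℝ × ℝ × ℝ) : AnalyticAt ℝ (cQ C) p := by
  unfold cQ
  have hx := analyticAt_x p
  have hy := analyticAt_y p
  have ht := analyticAt_t p
  exact ((((((((hx.pow 2).add (hy.pow 2)).pow 3).add
    (analyticAt_const.mul ((hx.pow 4).add (hy.pow 4)))).add
    ((analyticAt_const.mul (hx.pow 2)).mul (hy.pow 2))).add
    (analyticAt_const.mul ((hx.pow 2).add (hy.pow 2)))).add
    (analyticAt_const.mul ((analyticAt_const.sub ht).pow 2))).add
    ((((analyticAt_const.mul (hx.pow 3)).sub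
      ((analyticAt_const.mul hx).mul (hy.pow 2))).sub
      (analyticAt_const.mul hx)).mul (analyticAt_const.sub ht)))

lemma analyticAt_cZ1 (p : ℝ × ℝ × ℝ) : AnalyticAt ℝ cZ1 p := by
  unfold cZ1
  exact (analyticAt_const.add ((analyticAt_x p).pow 2)).add ((analyticAt_y p).pow 2)

theorem V_realAnalytic_off_singularity (C : ℝ) :
    AnalyticOnNhd ℝ (fun p : ℝ × ℝ × ℝ => V C p.1 p.2.1 p.2.2)
      {p : ℝ × ℝ × ℝ | p ≠ (0, 0, C)} := by
  have hfun : (fun p : ℝ × ℝ × ℝ => V C p.1 p.2.1 p.2.2) = Fv C := funext (V_eq_Fv C)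
  rw [hfun]
  intro p hp
  obtain ⟨x, y, t⟩ := p
  have hne : ¬(x = 0 ∧ y = 0 ∧ t = C) := by
    rintro ⟨h1, h2, h3⟩
    exact hp (by simp [h1, h2, h3])
  -- nonvanishing of the complex denominators
  have hD : cD C (x, y, t) ≠ 0 := by
    have hcast : cD C (x, y, t)
        = (((x^2 - y^2)^2 + (y*(1 + x^2 - y^2/3))^2
            + (x*(1 + y^2 - x^2/3) + C - t)^2 : ℝ) : ℂ) := by
      unfold cD cA cB
      push_cast
      ring
    rw [hcast]
    exact_mod_cast S_ne_zero C x y t hne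
  have hQ : cQ C (x, y, t) ≠ 0 := by
    have hcast : cQ C (x, y, t) = ((Q C x y t : ℝ) : ℂ) := by
      unfold cQ Q
      push_cast
      ring
    rw [hcast]
    exact_mod_cast Q_ne_zero C x y t hne
  have hZ1 : cZ1 (x, y, t) ≠ 0 := by
    have hcast : cZ1 (x, y, t) = ((1 + x^2 + y^2 : ℝ) : ℂ) := by
      unfold cZ1; push_cast; ring
    rw [hcast]
    exact_mod_cast (by positivity : (1 + x^2 + y^2 : ℝ) ≠ 0)
  -- assemble
  unfold Fv
  exact ((((analyticAt_cW C _).pow 2).div ((analyticAt_cD C _).pow 2)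
      (pow_ne_zero 2 hD)).add
    ((analyticAt_const.mul ((analyticAt_cN C _).div (analyticAt_cQ C _) hQ)).div
      (analyticAt_cZ1 _) hZ1)).sub
    ((((analyticAt_const.mul (analyticAt_cZ _)).mul (analyticAt_cW C _)).div
      ((analyticAt_cD C _).mul (analyticAt_cZ1 _)) (mul_ne_zero hD hZ1)))
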